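/- Let n < 1 and ν > (1 − n)/2. Then for all x > 0, ∫_x^∞ K_{ν+n}(t)/t^ν dt < (2(ν+n−1)/(2ν+n−1))·K_{ν+n−1}(x)/x^ν − ((n−1)/(2ν+n−1))·K_{ν+n−3}(x)/x^ν. -/

import Mathlib

/-!
Put `D = 2ν + n - 1 > 0`, `a = 2(ν + n - 1) / D`, `b = (1 - n) / D` and
`G(t) = (a K_{ν+n-1}(t) + b K_{ν+n-3}(t)) / t ^ ν`. Differentiating under the integral sign gives
`K_μ' = -(K_{μ-1} + K_{μ+1}) / 2`, and integrating by parts gives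
`K_{μ+1} - K_{μ-1} = 2μ K_μ / t`. Since `a + b = 1` and the `K_{ν+n-1}` terms cancel,
`G' = -K_{ν+n} / t ^ ν - c K_{ν+n-3} / t ^ (ν + 1)` with `c = (1 - n)(3 - n) / D > 0`.
Everything decays exponentially, so
`G(x) = ∫_x^∞ K_{ν+n} / t ^ ν + c ∫_x^∞ K_{ν+n-3} / t ^ (ν + 1)`, and the last integral is positive.
-/

open MeasureTheory Set Real

/-- Modified Bessel function of the second kind:
`K_ν(x) = ∫_0^∞ exp(−x cosh t) cosh(ν t) dt`. -/
noncomputable def besselK (ν x : ℝ) : ℝ :=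
  ∫ t in Ioi (0 : ℝ), Real.exp (-(x * Real.cosh t)) * Real.cosh (ν * t)

open Filter Topology

lemma Real.one_add_sq_div_two_le_cosh (t : ℝ) : 1 + t ^ 2 / 2 ≤ cosh t := by
  simpa [Finset.sum_range_succ] using
    sum_le_hasSum (Finset.range 2) (fun n _ => by rw [pow_mul]; positivity) (hasSum_cosh t)

lemma Real.cosh_le_exp_abs (t : ℝ) : cosh t ≤ exp |t| := by
  rw [← cosh_abs, cosh_eq]
  linarith [exp_le_exp.2 (neg_le_self (abs_nonneg t))]

lemma Real.cosh_mul_cosh_mul (a t : ℝ) :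
    cosh t * cosh (a * t) = (cosh ((a + 1) * t) + cosh ((a - 1) * t)) / 2 := by
  rw [add_mul, sub_mul, one_mul, cosh_add, cosh_sub]; ring

lemma Real.sinh_mul_sinh_mul (a t : ℝ) :
    sinh t * sinh (a * t) = (cosh ((a + 1) * t) - cosh ((a - 1) * t)) / 2 := by
  rw [add_mul, sub_mul, one_mul, cosh_add, cosh_sub]; ring

/-- Complete the square against `cosh t ≥ 1 + t ^ 2 / 2`. -/
lemma Real.mul_sub_mul_cosh_le {x : ℝ} (hx : 0 < x) (c t : ℝ) :
    c * t - x * cosh t ≤ (c + 1) ^ 2 / (2 * x) - t := by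
  have hsq : 0 ≤ (x * t - (c + 1)) ^ 2 / (2 * x) := by positivity
  have hcosh : x * (1 + t ^ 2 / 2) ≤ x * cosh t :=
    mul_le_mul_of_nonneg_left (one_add_sq_div_two_le_cosh t) hx.le
  have hid : (x * t - (c + 1)) ^ 2 / (2 * x) =
      x * t ^ 2 / 2 - (c + 1) * t + (c + 1) ^ 2 / (2 * x) := by
    field_simp; ring
  nlinarith

lemma setIntegral_pos_of_forall_pos {α : Type*} [MeasurableSpace α] {μ : Measure α}
    {f : α → ℝ} {s : Set α} (hs : MeasurableSet s) (hμs : μ s ≠ 0) (hf : IntegrableOn f s μ)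
    (hpos : ∀ t ∈ s, 0 < f t) : 0 < ∫ t in s, f t ∂μ := by
  rw [setIntegral_pos_iff_support_of_nonneg_ae
    (ae_restrict_of_forall_mem hs fun t ht => (hpos t ht).le) hf]
  have hsub : s ⊆ Function.support f ∩ s := fun t ht => ⟨(hpos t ht).ne', ht⟩
  exact pos_iff_ne_zero.2 fun h => hμs (measure_mono_null hsub h)

noncomputable def besselKIntegrand (ν x t : ℝ) : ℝ := exp (-(x * cosh t)) * cosh (ν * t)

lemma besselK_eq_integral (ν x : ℝ) : besselK ν x = ∫ t in Ioi 0, besselKIntegrand ν x t := rfl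

lemma besselKIntegrand_pos (ν x t : ℝ) : 0 < besselKIntegrand ν x t := by
  unfold besselKIntegrand; positivity

@[fun_prop]
lemma continuous_besselKIntegrand (ν x : ℝ) : Continuous (besselKIntegrand ν x) := by
  unfold besselKIntegrand; fun_prop

lemma besselKIntegrand_le_mul_exp_neg {x : ℝ} (hx : 0 < x) (ν : ℝ) {t : ℝ} (ht : 0 ≤ t) :
    besselKIntegrand ν x t ≤ exp ((|ν| + 1) ^ 2 / (2 * x)) * exp (-t) := by
  have hcosh : cosh (ν * t) ≤ exp (|ν| * t) := by
    simpa [abs_mul, abs_of_nonneg ht] using cosh_le_exp_abs (ν * t)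
  calc besselKIntegrand ν x t ≤ exp (-(x * cosh t)) * exp (|ν| * t) :=
        mul_le_mul_of_nonneg_left hcosh (exp_pos _).le
    _ = exp (|ν| * t - x * cosh t) := by rw [← exp_add]; ring_nf
    _ ≤ exp ((|ν| + 1) ^ 2 / (2 * x) - t) := exp_le_exp.2 (mul_sub_mul_cosh_le hx _ _)
    _ = _ := by rw [sub_eq_add_neg, exp_add]

lemma integrableOn_besselKIntegrand {x : ℝ} (hx : 0 < x) (ν : ℝ) :
    IntegrableOn (besselKIntegrand ν x) (Ioi 0) := by
  refine ((exp_neg_integrableOn_Ioi 0 one_pos).const_mul (exp ((|ν| + 1) ^ 2 / (2 * x)))).mono'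
    (continuous_besselKIntegrand ν x).aestronglyMeasurable ?_
  filter_upwards [ae_restrict_mem measurableSet_Ioi] with t ht
  rw [norm_of_nonneg (besselKIntegrand_pos ν x t).le, neg_one_mul]
  exact besselKIntegrand_le_mul_exp_neg hx ν (le_of_lt ht)

lemma besselKIntegrand_le_exp_sub_mul (ν : ℝ) {x y : ℝ} (hyx : y ≤ x) (t : ℝ) :
    besselKIntegrand ν x t ≤ exp (y - x) * besselKIntegrand ν y t := by
  unfold besselKIntegrand
  rw [← mul_assoc, ← exp_add]
  gcongr
  nlinarith [one_le_cosh t]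

lemma besselKIntegrand_antitone (ν t : ℝ) : Antitone (besselKIntegrand ν · t) := fun y _ hyx =>
  (besselKIntegrand_le_exp_sub_mul ν hyx t).trans <| mul_le_of_le_one_left
    (besselKIntegrand_pos ν y t).le (exp_le_one_iff.2 (sub_nonpos.2 hyx))

lemma besselK_pos (ν : ℝ) {x : ℝ} (hx : 0 < x) : 0 < besselK ν x :=
  setIntegral_pos_of_forall_pos measurableSet_Ioi (by simp) (integrableOn_besselKIntegrand hx ν)
    fun t _ => besselKIntegrand_pos ν x t

lemma besselK_le_exp_sub_mul (ν : ℝ) {x y : ℝ} (hy : 0 < y) (hyx : y ≤ x) :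
    besselK ν x ≤ exp (y - x) * besselK ν y := by
  rw [besselK_eq_integral, besselK_eq_integral, ← integral_const_mul]
  exact setIntegral_mono (integrableOn_besselKIntegrand (hy.trans_le hyx) ν)
    ((integrableOn_besselKIntegrand hy ν).const_mul _) (besselKIntegrand_le_exp_sub_mul ν hyx)

lemma hasDerivAt_besselKIntegrand (ν x t : ℝ) :
    HasDerivAt (besselKIntegrand ν · t)
      (-(besselKIntegrand (ν - 1) x t + besselKIntegrand (ν + 1) x t) / 2) x := by
  have h : HasDerivAt (fun y => exp (-(y * cosh t))) (exp (-(x * cosh t)) * -cosh t) x := by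
    simpa using ((hasDerivAt_id x).mul_const (cosh t)).neg.exp
  refine (h.mul_const (cosh (ν * t))).congr_deriv ?_
  simp only [besselKIntegrand]
  linear_combination (-exp (-(x * cosh t))) * cosh_mul_cosh_mul ν t

lemma hasDerivAt_besselK (ν : ℝ) {x : ℝ} (hx : 0 < x) :
    HasDerivAt (besselK ν) (-(besselK (ν - 1) x + besselK (ν + 1) x) / 2) x := by
  have hbound : ∀ t, ∀ y ∈ Ioi (x / 2),
      ‖-(besselKIntegrand (ν - 1) y t + besselKIntegrand (ν + 1) y t) / 2‖ ≤
        (besselKIntegrand (ν - 1) (x / 2) t + besselKIntegrand (ν + 1) (x / 2) t) / 2 := by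
    intro t y hy
    have h₁ := besselKIntegrand_antitone (ν - 1) t (le_of_lt hy)
    have h₂ := besselKIntegrand_antitone (ν + 1) t (le_of_lt hy)
    rw [norm_div, norm_neg, Real.norm_of_nonneg
      (add_pos (besselKIntegrand_pos _ _ _) (besselKIntegrand_pos _ _ _)).le, Real.norm_two]
    linarith
  have hint := fun μ => integrableOn_besselKIntegrand (half_pos hx) μ
  have h := (hasDerivAt_integral_of_dominated_loc_of_deriv_le (μ := volume.restrict (Ioi 0))
    (Ioi_mem_nhds (half_lt_self hx))
    (Eventually.of_forall fun y => (continuous_besselKIntegrand ν y).aestronglyMeasurable)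
    (integrableOn_besselKIntegrand hx ν) (by fun_prop) (ae_of_all _ hbound)
    (((hint _).add (hint _)).div_const 2)
    (ae_of_all _ fun t y _ => hasDerivAt_besselKIntegrand ν y t)).2
  rwa [integral_div, integral_neg, integral_add (integrableOn_besselKIntegrand hx _)
    (integrableOn_besselKIntegrand hx _)] at h

/-- Integrating `d/dt (exp (-x cosh t) sinh (μ t))` over `(0, ∞)`, where it vanishes at both ends. -/
lemma besselK_add_one (μ : ℝ) {x : ℝ} (hx : 0 < x) :
    besselK (μ + 1) x = besselK (μ - 1) x + 2 * μ / x * besselK μ x := by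
  set g : ℝ → ℝ := fun t => exp (-(x * cosh t)) * sinh (μ * t)
  set g' : ℝ → ℝ := fun t => μ * besselKIntegrand μ x t
    - x / 2 * (besselKIntegrand (μ + 1) x t - besselKIntegrand (μ - 1) x t)
  have hderiv : ∀ t, HasDerivAt g (g' t) t := by
    intro t
    have h := ((hasDerivAt_cosh t).const_mul x).neg.exp.mul
      ((hasDerivAt_sinh (μ * t)).comp t ((hasDerivAt_id t).const_mul μ))
    refine h.congr_deriv ?_
    simp only [g', besselKIntegrand, Function.comp_apply, Pi.neg_apply, mul_one]
    linear_combination (-(x * exp (-(x * cosh t)))) * sinh_mul_sinh_mul μ t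
  have hint := fun ν => integrableOn_besselKIntegrand hx ν
  have hdiff_int : IntegrableOn
      (fun t => x / 2 * (besselKIntegrand (μ + 1) x t - besselKIntegrand (μ - 1) x t)) (Ioi 0) :=
    ((hint _).sub (hint _)).const_mul _
  have hg'_int : IntegrableOn g' (Ioi 0) := ((hint μ).const_mul μ).sub hdiff_int
  have hg_int : IntegrableOn g (Ioi 0) := by
    refine (hint μ).mono' (by fun_prop) (ae_of_all _ fun t => ?_)
    rw [norm_mul, norm_of_nonneg (exp_pos _).le]
    exact mul_le_mul_of_nonneg_left ((abs_sinh _).trans_le (sinh_lt_cosh _).le |>.trans_eq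
      (cosh_abs _)) (exp_pos _).le
  have hFTC := integral_Ioi_of_hasDerivAt_of_tendsto (hderiv 0).continuousAt.continuousWithinAt
    (fun t _ => hderiv t) hg'_int
    (tendsto_zero_of_hasDerivAt_of_integrableOn_Ioi (fun t _ => hderiv t) hg'_int hg_int)
  simp only [g', g, mul_zero, sinh_zero, sub_zero] at hFTC
  rw [integral_sub ((hint μ).const_mul μ) hdiff_int,
    integral_const_mul, integral_const_mul, integral_sub (hint _) (hint _)] at hFTC
  rw [besselK_eq_integral, besselK_eq_integral, besselK_eq_integral]
  field_simp
  linarith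

lemma hasDerivAt_besselK_div_rpow (μ p : ℝ) {t : ℝ} (ht : 0 < t) :
    HasDerivAt (fun s => besselK μ s / s ^ p)
      (-(besselK (μ + 1) t / t ^ p) + (μ - p) * (besselK μ t / t ^ (p + 1))) t := by
  refine ((hasDerivAt_besselK μ ht).div (hasDerivAt_rpow_const (Or.inl ht.ne'))
    (rpow_pos_of_pos ht p).ne').congr_deriv ?_
  rw [besselK_add_one μ ht, rpow_add ht, rpow_sub_one ht.ne', rpow_one]
  have := (rpow_pos_of_pos ht p).ne'
  field_simp
  ring

lemma integrableOn_besselK_div_rpow (μ : ℝ) {p x : ℝ} (hp : 0 ≤ p) (hx : 0 < x) :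
    IntegrableOn (fun t => besselK μ t / t ^ p) (Ioi x) := by
  refine ((exp_neg_integrableOn_Ioi x one_pos).const_mul (exp x * (besselK μ x / x ^ p))).mono'
    ?_ ((ae_restrict_mem measurableSet_Ioi).mono fun t (ht : x < t) => ?_)
  · exact ContinuousOn.aestronglyMeasurable (fun t ht =>
      (hasDerivAt_besselK_div_rpow μ p (hx.trans ht)).continuousAt.continuousWithinAt)
      measurableSet_Ioi
  · have ht₀ := hx.trans ht
    have := besselK_pos μ hx
    rw [norm_of_nonneg (div_pos (besselK_pos μ ht₀) (rpow_pos_of_pos ht₀ p)).le]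
    calc besselK μ t / t ^ p ≤ exp (x - t) * besselK μ x / x ^ p :=
          div_le_div₀ (by positivity) (besselK_le_exp_sub_mul μ hx ht.le)
            (rpow_pos_of_pos hx p) (rpow_le_rpow hx.le ht.le hp)
      _ = _ := by rw [sub_eq_add_neg, exp_add, neg_one_mul]; ring

lemma tendsto_besselK_div_rpow_atTop (μ : ℝ) {p : ℝ} (hp : 0 ≤ p) :
    Tendsto (fun t => besselK μ t / t ^ p) atTop (𝓝 0) :=
  tendsto_zero_of_hasDerivAt_of_integrableOn_Ioi
    (fun t (ht : 1 < t) => hasDerivAt_besselK_div_rpow μ p (one_pos.trans ht))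
    ((integrableOn_besselK_div_rpow (μ + 1) hp one_pos).neg.add
      ((integrableOn_besselK_div_rpow μ (by linarith) one_pos).const_mul (μ - p)))
    (integrableOn_besselK_div_rpow μ hp one_pos)

lemma setIntegral_besselK_div_rpow_pos (μ : ℝ) {p x : ℝ} (hp : 0 ≤ p) (hx : 0 < x) :
    0 < ∫ t in Ioi x, besselK μ t / t ^ p :=
  setIntegral_pos_of_forall_pos measurableSet_Ioi (by simp) (integrableOn_besselK_div_rpow μ hp hx)
    fun t ht => div_pos (besselK_pos μ (hx.trans ht)) (rpow_pos_of_pos (hx.trans ht) p)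

lemma hasDerivAt_besselK_comparison (ν n : ℝ) (hD : 2 * ν + n - 1 ≠ 0) {t : ℝ} (ht : 0 < t) :
    HasDerivAt (fun s => 2 * (ν + n - 1) / (2 * ν + n - 1) * (besselK (ν + n - 1) s / s ^ ν)
        + (1 - n) / (2 * ν + n - 1) * (besselK (ν + n - 3) s / s ^ ν))
      (-(besselK (ν + n) t / t ^ ν
        + (1 - n) * (3 - n) / (2 * ν + n - 1) * (besselK (ν + n - 3) t / t ^ (ν + 1)))) t := by
  have hrec := besselK_add_one (ν + n - 1) ht
  rw [show ν + n - 1 + 1 = ν + n by ring, show ν + n - 1 - 1 = ν + n - 3 + 1 by ring] at hrec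
  refine (((hasDerivAt_besselK_div_rpow (ν + n - 1) ν ht).const_mul _).add
    ((hasDerivAt_besselK_div_rpow (ν + n - 3) ν ht).const_mul _)).congr_deriv ?_
  rw [show ν + n - 1 + 1 = ν + n by ring, hrec, rpow_add ht, rpow_one]
  have := (rpow_pos_of_pos ht ν).ne'
  field_simp
  ring

theorem stmt_3 (ν n : ℝ) (hn : n < 1) (hν : ν > (1 - n) / 2) :
    ∀ x : ℝ, 0 < x →
      (∫ t in Ioi x, besselK (ν + n) t / t ^ ν) <
        (2 * (ν + n - 1) / (2 * ν + n - 1)) * (besselK (ν + n - 1) x / x ^ ν)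
          - ((n - 1) / (2 * ν + n - 1)) * (besselK (ν + n - 3) x / x ^ ν) := by
  intro x hx
  have hν₀ : 0 ≤ ν := by linarith
  have hD : 0 < 2 * ν + n - 1 := by linarith
  have hc : 0 < (1 - n) * (3 - n) / (2 * ν + n - 1) := div_pos (by nlinarith) hD
  have hf := integrableOn_besselK_div_rpow (ν + n) hν₀ hx
  have hg := (integrableOn_besselK_div_rpow (ν + n - 3) (by linarith : 0 ≤ ν + 1) hx).const_mul
    ((1 - n) * (3 - n) / (2 * ν + n - 1))
  have hlim := ((tendsto_besselK_div_rpow_atTop (ν + n - 1) hν₀).const_mul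
    (2 * (ν + n - 1) / (2 * ν + n - 1))).add
    ((tendsto_besselK_div_rpow_atTop (ν + n - 3) hν₀).const_mul ((1 - n) / (2 * ν + n - 1)))
  rw [mul_zero, mul_zero, add_zero] at hlim
  have hFTC := integral_Ioi_of_hasDerivAt_of_tendsto
    (hasDerivAt_besselK_comparison ν n hD.ne' hx).continuousAt.continuousWithinAt
    (fun t ht => hasDerivAt_besselK_comparison ν n hD.ne' (hx.trans ht)) (hf.add hg).neg hlim
  rw [integral_neg, integral_add hf hg, integral_const_mul] at hFTC
  have hpos := mul_pos hc
    (setIntegral_besselK_div_rpow_pos (ν + n - 3) (p := ν + 1) (by linarith) hx)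
  have hcoeff : (n - 1) / (2 * ν + n - 1) = -((1 - n) / (2 * ν + n - 1)) := by ring
  rw [hcoeff]
  linarith
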